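/- arXiv:2504.19325 — 2 statements merged into one kernel-verified Lean document; each statement's English description precedes it below -/
import Mathlib

section
/- For k ≥ 2 and s ≥ 0, m^s(k,q) < m^{s+1}(k,q): any length-maximal A^sMDS code can be extended by repeating a coordinate on a secant hyperplane to obtain an A^{s+1}MDS code one longer. -/
/-- The number of points (with multiplicity) of the projective system `G`
lying on the hyperplane `ker φ`. -/
noncomputable def hypCount {F : Type*} [Field F] [DecidableEq F] {n k : ℕ}
    (G : Fin n → Fin k → F) (φ : (Fin k → F) →ₗ[F] F) : ℕ :=
  (Finset.univ.filter fun i => φ (G i) = 0).card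

/-- `G` is (the projective system of) a non-degenerate linear `[n,k,d]_q` code:
an `n`-multiset of nonzero points spanning `PG(k-1,q)`, every hyperplane containing
at most `n - d` points, and some hyperplane (a secant) containing exactly `n - d`. -/
def IsCodePS (F : Type*) [Field F] [DecidableEq F] (n k d : ℕ)
    (G : Fin n → Fin k → F) : Prop :=
  0 < d ∧ (∀ i, G i ≠ 0) ∧ Submodule.span F (Set.range G) = ⊤ ∧
  (∀ φ : (Fin k → F) →ₗ[F] F, φ ≠ 0 → hypCount G φ + d ≤ n) ∧
  (∃ φ : (Fin k → F) →ₗ[F] F, φ ≠ 0 ∧ hypCount G φ + d = n)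

/-- `mPar F s k` is `m^s(k,q)`: the maximum length of a non-degenerate
`[n,k,d]_q` code with Singleton defect `s = n - k + 1 - d`. -/
noncomputable def mPar (F : Type*) [Field F] [Fintype F] [DecidableEq F] (s k : ℕ) : ℕ :=
  sSup {n : ℕ | ∃ d : ℕ, ∃ G : Fin n → Fin k → F, IsCodePS F n k d G ∧ d + k + s = n + 1}

/-!
A linear code can be lengthened without changing its minimum distance by repeating one of its
points on a secant hyperplane: that hyperplane gains a point, no hyperplane gains more than one,
so `n` and the defect both grow by one while `d` stays. Applied to a code of maximal length
`m^s(k,q)` this yields a code of length `m^s(k,q) + 1` and defect `s + 1`. The suprema behave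
because the sets of lengths are bounded: for `k ≥ 2` every point lies on a hyperplane, so each
point occurs at most `n - d` times, whence `n ≤ (n - d) q^k`; and nonempty: start from the
`[k,k,1]` code of a basis and lengthen.
-/

open Finset Module

theorem exists_dual_ne_zero_apply_eq_zero {K V : Type*} [Field K] [AddCommGroup V] [Module K V]
    [FiniteDimensional K V] (hV : 1 < finrank K V) (v : V) :
    ∃ f : Dual K V, f ≠ 0 ∧ f v = 0 := by
  have hlt : K ∙ v < ⊤ := by
    refine lt_top_iff_ne_top.mpr fun htop => ?_
    have := finrank_span_le_card (R := K) ({v} : Set V)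
    rw [htop, finrank_top] at this
    simp only [Set.toFinset_singleton, card_singleton] at this
    omega
  obtain ⟨f, hf, hle⟩ := (K ∙ v).exists_le_ker_of_lt_top hlt
  exact ⟨f, hf, hle (Submodule.mem_span_singleton_self v)⟩

section Codes

variable {F : Type*} [Field F] [DecidableEq F] {n k d : ℕ} {G : Fin n → Fin k → F}

theorem hypCount_snoc (G : Fin n → Fin k → F) (v : Fin k → F) (φ : (Fin k → F) →ₗ[F] F) :
    hypCount (Fin.snoc G v) φ = hypCount G φ + if φ v = 0 then 1 else 0 := by
  simp only [hypCount, card_filter, Fin.sum_univ_castSucc, Fin.snoc_castSucc, Fin.snoc_last]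

theorem IsCodePS.card_fiber_le (h : IsCodePS F n k d G) (hk : 2 ≤ k) (v : Fin k → F) :
    #{i | G i = v} ≤ n - d := by
  obtain ⟨φ, hφ, hφv⟩ := exists_dual_ne_zero_apply_eq_zero (K := F)
    (by rw [finrank_fin_fun]; omega) v
  have hfiber : #{i | G i = v} ≤ hypCount G φ :=
    card_le_card (monotone_filter_right _ fun i _ (hi : G i = v) => hi ▸ hφv)
  obtain ⟨-, -, -, hH, -⟩ := h
  have := hH φ hφ
  omega

theorem IsCodePS.length_le [Fintype F] (h : IsCodePS F n k d G) (hk : 2 ≤ k) :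
    n ≤ (n - d) * Fintype.card (Fin k → F) :=
  calc n = #(univ : Finset (Fin n)) := (card_fin n).symm
    _ ≤ (n - d) * #(univ.image G) :=
      card_le_mul_card_image _ _ fun v _ => h.card_fiber_le hk v
    _ ≤ (n - d) * Fintype.card (Fin k → F) := Nat.mul_le_mul_left _ (card_le_univ _)

theorem isCodePS_single (hk : 0 < k) : IsCodePS F k k 1 fun i => Pi.single i 1 := by
  refine ⟨one_pos, fun i => by simp, ?_, fun φ hφ => ?_, LinearMap.proj ⟨0, hk⟩, ?_, ?_⟩
  · convert (Pi.basisFun F (Fin k)).span_eq using 3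
    ext i
    simp
  · obtain ⟨i, hi⟩ : ∃ i, φ (Pi.single i 1) ≠ 0 := by
      by_contra! hzero
      exact hφ ((Pi.basisFun F (Fin k)).ext fun i => by simpa using hzero i)
    have : hypCount (fun i => Pi.single i (1 : F)) φ < k := by
      simpa only [hypCount, card_univ, Fintype.card_fin] using
        card_lt_card (filter_ssubset.mpr ⟨i, mem_univ i, hi⟩)
    omega
  · intro h0
    simpa using LinearMap.congr_fun h0 (Pi.single ⟨0, hk⟩ 1)
  · simpa [hypCount, Pi.single_apply, eq_comm, filter_ne'] using Nat.sub_add_cancel hk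

theorem IsCodePS.exists_snoc (h : IsCodePS F n k d G) (hdn : d < n) :
    ∃ v, IsCodePS F (n + 1) k d (Fin.snoc G v) := by
  obtain ⟨hd, hnz, hspan, hH, φ₀, hφ₀, hsec⟩ := h
  obtain ⟨i₀, -, hi₀⟩ : ∃ i ∈ univ, φ₀ (G i) = 0 := by
    rw [← filter_nonempty_iff, ← card_pos]
    unfold hypCount at hsec
    omega
  refine ⟨G i₀, hd, fun i => ?_, ?_, fun ψ hψ => ?_, φ₀, hφ₀, ?_⟩
  · induction i using Fin.lastCases <;> simp [hnz]
  · refine eq_top_iff.mpr (hspan ▸ Submodule.span_mono ?_)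
    rintro _ ⟨i, rfl⟩
    exact ⟨i.castSucc, by simp⟩
  · have := hH ψ hψ
    rw [hypCount_snoc]
    split <;> omega
  · rw [hypCount_snoc, if_pos hi₀]
    omega

end Codes

section Lengths

variable (F : Type*) [Field F] [DecidableEq F] (k : ℕ)

def codeLengths (s : ℕ) : Set ℕ :=
  {n : ℕ | ∃ d : ℕ, ∃ G : Fin n → Fin k → F, IsCodePS F n k d G ∧ d + k + s = n + 1}

variable {F k}

theorem codeLengths_bddAbove [Fintype F] (hk : 2 ≤ k) (s : ℕ) : BddAbove (codeLengths F k s) := by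
  refine ⟨(k + s) * Fintype.card (Fin k → F), ?_⟩
  rintro n ⟨d, G, hG, hs⟩
  exact (hG.length_le hk).trans (Nat.mul_le_mul_right _ (by omega))

theorem succ_mem_codeLengths_succ (hk : 2 ≤ k) {s n : ℕ} (hn : n ∈ codeLengths F k s) :
    n + 1 ∈ codeLengths F k (s + 1) := by
  obtain ⟨d, G, hG, hs⟩ := hn
  obtain ⟨v, hv⟩ := hG.exists_snoc (by omega)
  exact ⟨d, _, hv, by omega⟩

theorem codeLengths_nonempty (hk : 2 ≤ k) (s : ℕ) : (codeLengths F k s).Nonempty := by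
  induction s with
  | zero => exact ⟨k, 1, _, isCodePS_single (by omega), by omega⟩
  | succ s ih => exact ⟨_, succ_mem_codeLengths_succ hk ih.some_mem⟩

end Lengths

/-- For `k ≥ 2` and any `s`, `m^s(k,q) < m^{s+1}(k,q)`. -/
theorem mPar_lt_succ_defect (F : Type*) [Field F] [Fintype F] [DecidableEq F]
    (s k : ℕ) (hk : 2 ≤ k) :
    mPar F s k < mPar F (s + 1) k := by
  have hmax : mPar F s k ∈ codeLengths F k s :=
    Nat.sSup_mem (codeLengths_nonempty hk s) (codeLengths_bddAbove hk s)
  exact Nat.lt_of_succ_le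
    (le_csSup (codeLengths_bddAbove hk (s + 1)) (succ_mem_codeLengths_succ hk hmax))
end

section
/- Let G be a non-degenerate [n,k,d]_q code with k > 2 and Singleton defect s. If n > s(q+1) + k − 1, then G is projective, i.e., the associated projective system has all multiplicities equal to 1 (equivalently d^⊥ ≥ 3). -/
open Finset Module

section Pencil

variable {K M : Type*} [Field K] [AddCommGroup M] [Module K M]

/-- The hyperplanes through `ker ψ₁ ⊓ ker ψ₂`, indexed by the projective line `Option K`. -/
def pencil (ψ₁ ψ₂ : M →ₗ[K] K) : Option K → M →ₗ[K] K
  | none => ψ₂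
  | some a => ψ₁ - a • ψ₂

variable {ψ₁ ψ₂ : M →ₗ[K] K}

theorem pencil_ne_zero (h : LinearIndependent K ![ψ₁, ψ₂]) : ∀ m, pencil ψ₁ ψ₂ m ≠ 0
  | none => h.ne_zero 1
  | some a => fun h0 => one_ne_zero
    (LinearIndependent.pair_iff.1 h 1 (-a) (by simpa [pencil, sub_eq_add_neg] using h0)).1

theorem exists_pencil_apply_eq_zero (x : M) : ∃ m, pencil ψ₁ ψ₂ m x = 0 := by
  by_cases h₂ : ψ₂ x = 0
  · exact ⟨none, h₂⟩
  · exact ⟨some (ψ₁ x / ψ₂ x), by simp [pencil, div_mul_cancel₀ _ h₂]⟩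

theorem pencil_apply_eq_zero {x : M} (h₁ : ψ₁ x = 0) (h₂ : ψ₂ x = 0) :
    ∀ m, pencil ψ₁ ψ₂ m x = 0
  | none => h₂
  | some a => by simp [pencil, h₁, h₂]

end Pencil

theorem Module.Basis.linearIndependent_coord_pair {ι K M : Type*} [Field K] [AddCommGroup M]
    [Module K M] (B : Basis ι K M) {u v : ι} (huv : u ≠ v) :
    LinearIndependent K ![B.coord u, B.coord v] := by
  classical
  refine LinearIndependent.pair_iff.2 fun s t h => ⟨?_, ?_⟩
  · simpa [Basis.repr_self_apply, huv.symm] using LinearMap.congr_fun h (B u)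
  · simpa [Basis.repr_self_apply, huv] using LinearMap.congr_fun h (B v)

theorem card_add_mul_card_axis_le_sum_hypCount {F : Type*} [Field F] [Fintype F] [DecidableEq F]
    {n k : ℕ} (G : Fin n → Fin k → F) (ψ₁ ψ₂ : (Fin k → F) →ₗ[F] F) :
    n + Fintype.card F * #{t | ψ₁ (G t) = 0 ∧ ψ₂ (G t) = 0} ≤
      ∑ m, hypCount G (pencil ψ₁ ψ₂ m) := by
  set A : Finset (Fin n) := {t | ψ₁ (G t) = 0 ∧ ψ₂ (G t) = 0}
  have hsum : ∑ m, hypCount G (pencil ψ₁ ψ₂ m) = ∑ t, #{m | pencil ψ₁ ψ₂ m (G t) = 0} :=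
    sum_card_bipartiteAbove_eq_sum_card_bipartiteBelow _
  have hcount : ∀ t, 1 + Fintype.card F * (if t ∈ A then 1 else 0) ≤
      #{m | pencil ψ₁ ψ₂ m (G t) = 0} := by
    intro t
    split_ifs with ht
    · obtain ⟨h₁, h₂⟩ := (mem_filter.1 ht).2
      simp [filter_true_of_mem fun m _ => pencil_apply_eq_zero h₁ h₂ m, add_comm]
    · simpa [Nat.one_le_iff_ne_zero, ← pos_iff_ne_zero, card_pos, filter_nonempty_iff]
        using exists_pencil_apply_eq_zero (G t)
  calc n + Fintype.card F * #A = ∑ t, (1 + Fintype.card F * (if t ∈ A then 1 else 0)) := by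
        simp [sum_add_distrib, mul_comm]
    _ ≤ _ := hsum ▸ sum_le_sum fun t _ => hcount t

theorem exists_finset_linearIndepOn_span_eq_top {ι K V : Type*} [Finite ι] [Field K]
    [AddCommGroup V] [Module K V] {v : ι → V} (hspan : Submodule.span K (Set.range v) = ⊤)
    {j : ι} (hj : v j ≠ 0) :
    ∃ I : Finset ι, j ∈ I ∧ LinearIndepOn K v (I : Set ι) ∧
      Submodule.span K (v '' I) = ⊤ := by
  obtain ⟨I, -, hjI, hIspan, hI⟩ :=
    exists_linearIndepOn_extension (LinearIndepOn.singleton (R := K) hj) (Set.subset_univ _)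
  obtain ⟨I, rfl⟩ := (Set.toFinite I).exists_finset_coe
  refine ⟨I, hjI rfl, hI, eq_top_iff.2 ?_⟩
  rw [← hspan, ← Set.image_univ]
  exact Submodule.span_le.2 hIspan

theorem exists_axis_of_smul_eq {ι K M : Type*} [Fintype ι] [Field K] [DecidableEq K]
    [AddCommGroup M] [Module K M] {G : ι → M} (hspan : Submodule.span K (Set.range G) = ⊤)
    (hk : 2 < finrank K M) {i j : ι} (hij : i ≠ j) (hj : G j ≠ 0) {c : K} (hc : G i = c • G j) :
    ∃ ψ₁ ψ₂ : M →ₗ[K] K, LinearIndependent K ![ψ₁, ψ₂] ∧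
      finrank K M ≤ #{t | ψ₁ (G t) = 0 ∧ ψ₂ (G t) = 0} + 1 := by
  classical
  obtain ⟨I, hjI, hI, hIspan⟩ := exists_finset_linearIndepOn_span_eq_top hspan hj
  let B : Basis I K M := .mk hI (by rw [← Set.image_eq_range, hIspan])
  have hcard : #I = finrank K M := by simp [finrank_eq_card_basis B]
  obtain ⟨u, hu, v, hv, huv⟩ := one_lt_card.1 (by rw [card_erase_of_mem hjI]; omega)
  obtain ⟨huj, huI⟩ := mem_erase.1 hu
  obtain ⟨hvj, hvI⟩ := mem_erase.1 hv
  have hcoord : ∀ t (ht : t ∈ I) w (hw : w ∈ I), t ≠ w → B.coord ⟨w, hw⟩ (G t) = 0 := by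
    intro t ht w hw htw
    have hBt : B ⟨t, ht⟩ = G t := Basis.mk_apply _ _ _
    rw [← hBt, Basis.coord_apply, Basis.repr_self_apply, if_neg (by simpa using htw)]
  refine ⟨B.coord ⟨u, huI⟩, B.coord ⟨v, hvI⟩, B.linearIndependent_coord_pair (by simpa), ?_⟩
  set A : Finset ι := {t | B.coord ⟨u, huI⟩ (G t) = 0 ∧ B.coord ⟨v, hvI⟩ (G t) = 0}
  have hiI : i ∉ I := fun hiI =>
    (linearIndepOn_pair_iff G hij.symm hj).1
      (hI.mono (by simp [Set.insert_subset_iff, *])) c hc.symm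
  have hju := hcoord j hjI u huI huj.symm
  have hjv := hcoord j hjI v hvI hvj.symm
  have hiA : i ∈ A := mem_filter.2 ⟨mem_univ _, by simp [hc, hju], by simp [hc, hjv]⟩
  have hsub : insert i I ⊆ A ∪ {u, v} := by
    intro t ht
    rcases mem_insert.1 ht with rfl | htI
    · exact mem_union_left _ hiA
    by_cases htuv : t = u ∨ t = v
    · rcases htuv with rfl | rfl <;> simp
    push Not at htuv
    exact mem_union_left _ <|
      mem_filter.2 ⟨mem_univ _, hcoord t htI u huI htuv.1, hcoord t htI v hvI htuv.2⟩
  have key : finrank K M + 1 ≤ #A + 2 := calc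
    finrank K M + 1 = #(insert i I) := by rw [card_insert_of_notMem hiI, hcard]
    _ ≤ #(A ∪ {u, v}) := card_le_card hsub
    _ ≤ #A + 2 := (card_union_le _ _).trans (by grw [card_le_two])
  omega

/-- If `G` is a non-degenerate `[n,k,d]_q` code with `k > 2`, Singleton defect `s`,
and `n > s(q+1) + k - 1`, then `G` is projective: no two points of the projective
system coincide (all multiplicities are `1`). -/
theorem long_code_projective (F : Type*) [Field F] [Fintype F] [DecidableEq F]
    (n k d s : ℕ) (G : Fin n → Fin k → F)
    (hk : 2 < k) (hG : IsCodePS F n k d G) (hs : d + k + s = n + 1)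
    (hn : s * (Fintype.card F + 1) + k ≤ n) :
    ∀ i j : Fin n, (∃ c : F, G i = c • G j) → i = j := by
  rintro i j ⟨c, hc⟩
  by_contra hij
  obtain ⟨-, hnz, hspan, hbound, -⟩ := hG
  obtain ⟨ψ₁, ψ₂, hψ, haxis⟩ :=
    exists_axis_of_smul_eq hspan (by simpa using hk) hij (hnz j) hc
  rw [finrank_fin_fun] at haxis
  have hpencil : ∑ m, (hypCount G (pencil ψ₁ ψ₂ m) + d) ≤ ∑ _m : Option F, n :=
    sum_le_sum fun m _ => hbound _ (pencil_ne_zero hψ m)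
  simp only [sum_add_distrib, sum_const, card_univ, Fintype.card_option, smul_eq_mul] at hpencil
  have hcount := card_add_mul_card_axis_le_sum_hypCount G ψ₁ ψ₂
  -- `n + q (k - 1) ≤ (q + 1)(n - d)`, i.e. `n ≤ s (q + 1) + k - 1` after substituting `d`
  nlinarith
end
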